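/- arXiv:2101.01744 — 4 statements merged into one kernel-verified Lean document; each statement's English description precedes it below -/
import Mathlib

section
/- For every z₀ ∈ ℂ \ ℝ and every x ∈ ℝ ∪ {∞}, there exists t ∈ ℝ ∪ {∞} such that the function z ↦ |(z−t)(x−z₀)/((z−z₀)(x−t))| on ℝ ∪ {∞} has maximum value 1, attained uniquely at z = x. -/
noncomputable section
open Polynomial Filter Set MeasureTheory
open scoped Classical


/-- The absolute value of the cross ratio `(z-t)(x-z₀)/((z-z₀)(x-t))` of points
`z, t, x ∈ ℝ ∪ {∞}` and `z₀ ∈ ℂ`, with the usual conventions at `∞`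
(factors containing `∞` cancel). -/
def crossAbs (z0 : ℂ) (x t z : OnePoint ℝ) : ℝ :=
  Option.casesOn x
    (Option.casesOn t 1 (fun tv => Option.casesOn z 1
      (fun zv => ‖((zv : ℂ) - tv) / ((zv : ℂ) - z0)‖)))
    (fun xv => Option.casesOn t
      (Option.casesOn z 0 (fun zv => ‖((xv : ℂ) - z0) / ((zv : ℂ) - z0)‖))
      (fun tv => Option.casesOn z
        (‖((xv : ℂ) - z0) / ((xv : ℂ) - tv)‖)
        (fun zv => ‖(((zv : ℂ) - tv) * ((xv : ℂ) - z0)) /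
          (((zv : ℂ) - z0) * ((xv : ℂ) - tv))‖)))

/-!
Write `z₀ = a + b i` with `b ≠ 0`; for real `z`, `|z - z₀|² = (z - a)² + b²`, so every claim is a
comparison of real quadratics. If `x = ∞` take `t = a`: then `|z - a| < |z - z₀|`. If `x = a` take
`t = ∞`: then `|x - z₀| = |b| < |z - z₀|` for `z ≠ a`. Otherwise take `t` with
`(x - t)(x - a) = |x - z₀|²`, so that the Apollonius circle `|z - t| = c |z - z₀|` through `x` is
tangent to `ℝ` at `x`. Modulo this relation,
`|x - z₀|² (|z - z₀|²(x - t)² - (z - t)²|x - z₀|²) = b²(x - t)²(z - x)²`,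
so `x` is the strict maximum; `|x - z₀|² ((x - t)² - |x - z₀|²) = b²(x - t)²` handles `z = ∞`.
-/

open Complex

def HasUniqueMaxOneAt (f : OnePoint ℝ → ℝ) (x : OnePoint ℝ) : Prop :=
  (∀ z, f z ≤ 1) ∧ f x = 1 ∧ ∀ z, f z = 1 → z = x

lemma hasUniqueMaxOneAt_of_lt {f : OnePoint ℝ → ℝ} {x : OnePoint ℝ} (hx : f x = 1)
    (hlt : ∀ z, z ≠ x → f z < 1) : HasUniqueMaxOneAt f x := by
  refine ⟨fun z => ?_, hx, fun z hz => ?_⟩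
  · rcases eq_or_ne z x with rfl | hzx
    · exact hx.le
    · exact (hlt z hzx).le
  · by_contra hzx
    exact (hlt z hzx).ne hz

lemma norm_div_lt_one_iff_normSq_lt {w v : ℂ} (hv : v ≠ 0) :
    ‖w / v‖ < 1 ↔ normSq w < normSq v := by
  rw [norm_div, div_lt_one (norm_pos_iff.mpr hv), ← sq_lt_sq₀ (norm_nonneg w) (norm_nonneg v),
    Complex.sq_norm, Complex.sq_norm]

lemma normSq_ofReal_sub_ofReal (x y : ℝ) : normSq ((x : ℂ) - y) = (x - y) ^ 2 := by
  rw [← ofReal_sub, normSq_ofReal, sq]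

lemma normSq_ofReal_sub (x : ℝ) (z0 : ℂ) :
    normSq ((x : ℂ) - z0) = (x - z0.re) ^ 2 + z0.im ^ 2 := by
  simp only [normSq_apply, sub_re, sub_im, ofReal_re, ofReal_im]
  ring

lemma ofReal_sub_ne_zero {z0 : ℂ} (hz0 : z0.im ≠ 0) (x : ℝ) : (x : ℂ) - z0 ≠ 0 := by
  intro h
  exact hz0 (by simpa using (congrArg im h).symm)

section

variable {z0 : ℂ} (hz0 : z0.im ≠ 0)
include hz0

lemma hasUniqueMaxOneAt_crossAbs_infty :
    HasUniqueMaxOneAt (crossAbs z0 OnePoint.infty (z0.re : ℝ)) OnePoint.infty := by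
  refine hasUniqueMaxOneAt_of_lt rfl fun z hz => ?_
  induction z using OnePoint.rec with
  | infty => exact absurd rfl hz
  | coe z =>
    show ‖((z : ℂ) - z0.re) / ((z : ℂ) - z0)‖ < 1
    rw [norm_div_lt_one_iff_normSq_lt (ofReal_sub_ne_zero hz0 z), normSq_ofReal_sub_ofReal,
      normSq_ofReal_sub]
    exact lt_add_of_pos_right _ (sq_pos_of_ne_zero hz0)

lemma hasUniqueMaxOneAt_crossAbs_re :
    HasUniqueMaxOneAt (crossAbs z0 (z0.re : ℝ) OnePoint.infty) (z0.re : ℝ) := by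
  refine hasUniqueMaxOneAt_of_lt ?_ fun z hz => ?_
  · show ‖((z0.re : ℂ) - z0) / ((z0.re : ℂ) - z0)‖ = 1
    rw [div_self (ofReal_sub_ne_zero hz0 _), norm_one]
  induction z using OnePoint.rec with
  | infty => exact zero_lt_one
  | coe z =>
    show ‖((z0.re : ℂ) - z0) / ((z : ℂ) - z0)‖ < 1
    have hza : z - z0.re ≠ 0 := sub_ne_zero.mpr fun h => hz (congrArg _ h)
    rw [norm_div_lt_one_iff_normSq_lt (ofReal_sub_ne_zero hz0 z), normSq_ofReal_sub,
      normSq_ofReal_sub, sub_self]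
    have := sq_pos_of_ne_zero hza
    linarith

lemma hasUniqueMaxOneAt_crossAbs_coe {x t : ℝ}
    (ht : (x - t) * (x - z0.re) = normSq ((x : ℂ) - z0)) :
    HasUniqueMaxOneAt (crossAbs z0 x t) x := by
  have hN : 0 < normSq ((x : ℂ) - z0) := normSq_pos.mpr (ofReal_sub_ne_zero hz0 x)
  rw [normSq_ofReal_sub] at ht hN
  set a := z0.re
  set b := z0.im
  have hxt : x - t ≠ 0 := by
    rintro h
    rw [h, zero_mul] at ht
    linarith
  have hxtC : (x : ℂ) - t ≠ 0 := by exact_mod_cast hxt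
  refine hasUniqueMaxOneAt_of_lt ?_ fun z hz => ?_
  · show ‖(((x : ℂ) - t) * ((x : ℂ) - z0)) / (((x : ℂ) - z0) * ((x : ℂ) - t))‖ = 1
    rw [mul_comm ((x : ℂ) - t), div_self (mul_ne_zero (ofReal_sub_ne_zero hz0 x) hxtC), norm_one]
  induction z using OnePoint.rec with
  | infty =>
    show ‖((x : ℂ) - z0) / ((x : ℂ) - t)‖ < 1
    rw [norm_div_lt_one_iff_normSq_lt hxtC, normSq_ofReal_sub_ofReal, normSq_ofReal_sub]
    have gap : ((x - a) ^ 2 + b ^ 2) * ((x - t) ^ 2 - ((x - a) ^ 2 + b ^ 2)) =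
        b ^ 2 * (x - t) ^ 2 := by
      linear_combination ((x - t) * (x - a) + ((x - a) ^ 2 + b ^ 2)) * ht
    have := pos_of_mul_pos_right (lt_of_lt_of_eq (by positivity) gap.symm) hN.le
    linarith
  | coe z =>
    show ‖(((z : ℂ) - t) * ((x : ℂ) - z0)) / (((z : ℂ) - z0) * ((x : ℂ) - t))‖ < 1
    rw [norm_div_lt_one_iff_normSq_lt (mul_ne_zero (ofReal_sub_ne_zero hz0 z) hxtC), map_mul,
      map_mul, normSq_ofReal_sub_ofReal, normSq_ofReal_sub_ofReal, normSq_ofReal_sub,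
      normSq_ofReal_sub]
    have gap : ((x - a) ^ 2 + b ^ 2) *
        (((z - a) ^ 2 + b ^ 2) * (x - t) ^ 2 - (z - t) ^ 2 * ((x - a) ^ 2 + b ^ 2)) =
        b ^ 2 * (x - t) ^ 2 * (z - x) ^ 2 := by
      linear_combination ((z - x) ^ 2 * ((x - t) * (x - a) + ((x - a) ^ 2 + b ^ 2)) +
        2 * ((x - a) ^ 2 + b ^ 2) * (z - x) * (x - t)) * ht
    have hzx : z - x ≠ 0 := sub_ne_zero.mpr fun h => hz (congrArg _ h)
    have := pos_of_mul_pos_right (lt_of_lt_of_eq (by positivity) gap.symm) hN.le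
    linarith

end

/-- For every `z₀ ∈ ℂ \ ℝ` and every `x ∈ ℝ ∪ {∞}` there is `t ∈ ℝ ∪ {∞}` such that
`z ↦ |(z-t)(x-z₀)/((z-z₀)(x-t))|` has maximum `1` on `ℝ ∪ {∞}`, attained only at `z = x`. -/
theorem crossratio_max (z0 : ℂ) (hz0 : z0.im ≠ 0) (x : OnePoint ℝ) :
    ∃ t : OnePoint ℝ,
      (∀ z : OnePoint ℝ, crossAbs z0 x t z ≤ 1) ∧
      crossAbs z0 x t x = 1 ∧
      (∀ z : OnePoint ℝ, crossAbs z0 x t z = 1 → z = x) := by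
  induction x using OnePoint.rec with
  | infty => exact ⟨_, hasUniqueMaxOneAt_crossAbs_infty hz0⟩
  | coe x =>
    rcases eq_or_ne x z0.re with rfl | hx
    · exact ⟨_, hasUniqueMaxOneAt_crossAbs_re hz0⟩
    · refine ⟨(x - normSq ((x : ℂ) - z0) / (x - z0.re) : ℝ),
        hasUniqueMaxOneAt_crossAbs_coe hz0 ?_⟩
      rw [sub_sub_cancel, div_mul_cancel₀ _ (sub_ne_zero.mpr hx)]
end
end

section
/- Let E ⊂ ℝ be compact with infinitely many points, n ≥ 1, poles c₁,…,cₙ ∈ ℝ̄ \ E determining the space L_n of rational functions P/R_n with deg P ≤ n and R_n = ∏_{c_k ≠ ∞}(z − c_k), and let x_* = ∞. If F_n ∈ L_n is an extremal function for the problem of maximizing the real part of the leading coefficient subject to sup_E |F_n| ≤ 1, then every generalized zero of F_n is real: F_n has no zeros in ℂ \ ℝ and at every nonreal point the pole order of F_n equals its maximal allowed order. -/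
/-!
If the extremal function `F` vanished at a nonreal `z`, write `F = (X - z) P / q` and replace the
factor `X - z` by `t (X - Re z)`. On the real line `|r - Re z| < |r - z|`, so by compactness of `E`
some `t > 1` keeps the new function bounded by `1` on `E`. It has the same degree and no new poles,
so it stays in `L_n`, while its leading coefficient is `t` times that of `F`. That coefficient has
positive real part (compare `F` with `ε X^d`), which contradicts extremality. Nonreal points are
never prescribed poles, so `F` has no pole there either.
-/

noncomputable section
open Polynomial Filter Set MeasureTheory
open scoped Classical


abbrev Sph := OnePoint ℂ
abbrev RLine := OnePoint ℝ

/-- Embedding of the extended real line into the Riemann sphere. -/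
def embR : RLine → Sph := Option.map Complex.ofReal

/-- Order of vanishing of a rational function at a point of the sphere
(negative at poles); junk value for `F = 0`. -/
def ordAt (F : RatFunc ℂ) (x : Sph) : ℤ :=
  Option.casesOn x ((F.denom.natDegree : ℤ) - F.num.natDegree)
    (fun z => (F.num.rootMultiplicity z : ℤ) - F.denom.rootMultiplicity z)

/-- Evaluation at a finite point, with junk value `0` at poles. -/
def evalC (F : RatFunc ℂ) (z : ℂ) : ℂ := F.num.eval z / F.denom.eval z

/-- Sphere-valued evaluation of a rational function on the Riemann sphere. -/
def evalSph (F : RatFunc ℂ) (x : Sph) : Sph :=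
  Option.casesOn x
    (if F.denom.natDegree < F.num.natDegree then none
     else some (if F.num.natDegree = F.denom.natDegree then
        F.num.leadingCoeff / F.denom.leadingCoeff else 0))
    (fun z => if F.denom.eval z = 0 then none else some (F.num.eval z / F.denom.eval z))

/-- Evaluation at a point of the extended real line (junk `0` at poles). -/
def evalPt (F : RatFunc ℂ) (x : RLine) : ℂ := (evalSph F (embR x)).getD 0

/-- The pole divisor `D_n^∞` determined by the prescribed list of poles. -/
def polesDiv {n : ℕ} (c : Fin n → RLine) (x : Sph) : ℕ :=
  (Finset.univ.filter (fun k => embR (c k) = x)).card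

/-- `F ∈ L(D_n^∞)`: the polar divisor of `F` is bounded by the prescribed divisor. -/
def MemL {n : ℕ} (c : Fin n → RLine) (F : RatFunc ℂ) : Prop :=
  ∀ x : Sph, (-(ordAt F x)).toNat ≤ polesDiv c x

/-- `lim_{x → x_*} F(x) / r(x,x_*)^d`, the "leading coefficient" of `F` at `x_*`. -/
def leadVal (F : RatFunc ℂ) (xs : RLine) (d : ℕ) : ℂ :=
  Option.casesOn xs
    ((evalSph (F / RatFunc.X ^ d) none).getD 0)
    (fun r => (evalSph (F * (RatFunc.C (r : ℂ) - RatFunc.X) ^ d) (some (r : ℂ))).getD 0)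

/-- `sup_E |F| ≤ 1`. -/
def UnitBdd (E : Set RLine) (F : RatFunc ℂ) : Prop :=
  ∀ x ∈ E, ‖evalPt F x‖ ≤ 1

/-- `F` solves the rational Chebyshev/residual extremal problem on `E` with poles `c`
and extremal point `xs`. -/
def IsExtremal {n : ℕ} (E : Set RLine) (c : Fin n → RLine) (xs : RLine) (F : RatFunc ℂ) : Prop :=
  MemL c F ∧ UnitBdd E F ∧
  ∀ G : RatFunc ℂ, MemL c G → UnitBdd E G →
    (leadVal G xs (polesDiv c (embR xs))).re ≤ (leadVal F xs (polesDiv c (embR xs))).re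

/-- Generalized zero divisor `D_n^0 = (F) + D_n^∞`. -/
def Dn0 {n : ℕ} (c : Fin n → RLine) (F : RatFunc ℂ) (x : Sph) : ℤ :=
  ordAt F x + polesDiv c x

/-- A rational function is real if it commutes with complex conjugation. -/
def RealRF (F : RatFunc ℂ) : Prop :=
  ∀ z : ℂ, evalC F (starRingEnd ℂ z) = starRingEnd ℂ (evalC F z)



local notation "ι" => algebraMap ℂ[X] (RatFunc ℂ)

section RationalFunctionFromFraction

variable {p q : ℂ[X]}

lemma num_mul_eq_mul_denom_div (hq : q ≠ 0) : (ι p / ι q).num * q = p * (ι p / ι q).denom :=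
  (RatFunc.num_mul_eq_mul_denom_iff hq).mpr rfl

lemma num_div_ne_zero (hp : p ≠ 0) (hq : q ≠ 0) : (ι p / ι q).num ≠ 0 :=
  RatFunc.num_ne_zero (div_ne_zero (RatFunc.algebraMap_ne_zero hp) (RatFunc.algebraMap_ne_zero hq))

lemma ordAt_div_some (hp : p ≠ 0) (hq : q ≠ 0) (w : ℂ) :
    ordAt (ι p / ι q) (some w) = (p.rootMultiplicity w : ℤ) - q.rootMultiplicity w := by
  have h := congrArg (rootMultiplicity w) (num_mul_eq_mul_denom_div (p := p) hq)
  rw [rootMultiplicity_mul (mul_ne_zero (num_div_ne_zero hp hq) hq),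
    rootMultiplicity_mul (mul_ne_zero hp (RatFunc.denom_ne_zero _))] at h
  change ((ι p / ι q).num.rootMultiplicity w : ℤ) - (ι p / ι q).denom.rootMultiplicity w = _
  omega

lemma ordAt_div_none (hp : p ≠ 0) (hq : q ≠ 0) :
    ordAt (ι p / ι q) none = (q.natDegree : ℤ) - p.natDegree := by
  have h := congrArg natDegree (num_mul_eq_mul_denom_div (p := p) hq)
  rw [natDegree_mul (num_div_ne_zero hp hq) hq, natDegree_mul hp (RatFunc.denom_ne_zero _)] at h
  change ((ι p / ι q).denom.natDegree : ℤ) - (ι p / ι q).num.natDegree = _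
  omega

lemma evalPt_div_some {r : ℝ} (hq : q.eval (r : ℂ) ≠ 0) :
    evalPt (ι p / ι q) (some r) = p.eval (r : ℂ) / q.eval (r : ℂ) := by
  have hq0 : q ≠ 0 := fun h => hq (by simp [h])
  obtain ⟨u, hu⟩ := (RatFunc.denom_dvd (x := ι p / ι q) hq0).mpr ⟨p, rfl⟩
  have hd : (ι p / ι q).denom.eval (r : ℂ) ≠ 0 := fun h => hq (by rw [hu, eval_mul, h, zero_mul])
  have h := congrArg (eval (r : ℂ)) (num_mul_eq_mul_denom_div (p := p) hq0)
  rw [eval_mul, eval_mul] at h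
  change Option.getD (if (ι p / ι q).denom.eval (r : ℂ) = 0 then none else
    some ((ι p / ι q).num.eval (r : ℂ) / (ι p / ι q).denom.eval (r : ℂ))) 0 = _
  rw [if_neg hd, Option.getD_some, div_eq_div_iff hd hq]
  exact h

lemma leadVal_div_none (hp : p ≠ 0) (hq : q ≠ 0) (d : ℕ) :
    leadVal (ι p / ι q) none d =
      if p.natDegree = q.natDegree + d then p.leadingCoeff / q.leadingCoeff else 0 := by
  have hqd : q * X ^ d ≠ 0 := mul_ne_zero hq (pow_ne_zero _ X_ne_zero)
  have hsplit : ι p / ι q / RatFunc.X ^ d = ι p / ι (q * X ^ d) := by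
    rw [map_mul, map_pow, RatFunc.algebraMap_X, div_div]
  set G := ι p / ι q / RatFunc.X ^ d
  have hnum : G.num ≠ 0 := hsplit ▸ num_div_ne_zero hp hqd
  have hcross : G.num * (q * X ^ d) = p * G.denom := by
    rw [hsplit]; exact num_mul_eq_mul_denom_div hqd
  have hdeg := congrArg natDegree hcross
  rw [natDegree_mul hnum hqd, natDegree_mul hp (RatFunc.denom_ne_zero _), natDegree_mul hq
    (pow_ne_zero _ X_ne_zero), natDegree_X_pow] at hdeg
  have hlc := congrArg leadingCoeff hcross
  simp only [leadingCoeff_mul, leadingCoeff_X_pow, mul_one] at hlc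
  change Option.getD (if G.denom.natDegree < G.num.natDegree then none else some
    (if G.num.natDegree = G.denom.natDegree then G.num.leadingCoeff / G.denom.leadingCoeff
      else 0)) 0 = _
  by_cases heq : p.natDegree = q.natDegree + d
  · rw [if_neg (by omega), if_pos (by omega), if_pos heq, Option.getD_some,
      div_eq_div_iff (leadingCoeff_ne_zero.2 (RatFunc.denom_ne_zero _))
        (leadingCoeff_ne_zero.2 hq)]
    exact hlc
  · rw [if_neg heq]
    split_ifs <;> first | rfl | omega

lemma memL_div_iff {n : ℕ} {c : Fin n → RLine} (hp : p ≠ 0) (hq : q ≠ 0) :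
    MemL c (ι p / ι q) ↔ p.natDegree ≤ q.natDegree + polesDiv c none ∧
      ∀ w, q.rootMultiplicity w ≤ p.rootMultiplicity w + polesDiv c (some w) := by
  change (∀ x : Option ℂ, _) ↔ _
  rw [Option.forall, ordAt_div_none hp hq]
  simp only [ordAt_div_some hp hq, Int.toNat_le]
  exact and_congr (by omega) (forall_congr' fun w => by omega)

end RationalFunctionFromFraction

section Poles

variable {n : ℕ} (c : Fin n → RLine)

lemma polesDiv_some_eq_zero {w : ℂ} (h : ∀ k, embR (c k) ≠ some w) : polesDiv c (some w) = 0 :=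
  Finset.card_eq_zero.2 (Finset.filter_eq_empty_iff.2 fun k _ => h k)

lemma polesDiv_some_eq_zero_of_im_ne_zero {z : ℂ} (hz : z.im ≠ 0) : polesDiv c (some z) = 0 :=
  polesDiv_some_eq_zero c fun k hk => by
    obtain ⟨r, -, rfl⟩ := Option.map_eq_some_iff.1 hk
    exact hz (Complex.ofReal_im r)

lemma polesDiv_some_ofReal_eq_zero {E : Set ℝ}
    (hc : ∀ k, c k ∉ (fun r : ℝ => (some r : RLine)) '' E) {r : ℝ} (hr : r ∈ E) :
    polesDiv c (some (r : ℂ)) = 0 :=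
  polesDiv_some_eq_zero c fun k hk => by
    obtain ⟨s, hs, hsr⟩ := Option.map_eq_some_iff.1 hk
    exact hc k ⟨r, hr, by rw [hs, Complex.ofReal_injective hsr]⟩

end Poles

lemma RatFunc.num_eval_ne_zero_or_denom_eval_ne_zero (F : RatFunc ℂ) (w : ℂ) :
    F.num.eval w ≠ 0 ∨ F.denom.eval w ≠ 0 := by
  simpa [aeval_def, eval₂_eq_eval_map] using
    (isCoprime_iff_aeval_ne_zero F.num F.denom).1 F.isCoprime_num_denom w

lemma MemL.denom_eval_ne_zero {n : ℕ} {c : Fin n → RLine} {F : RatFunc ℂ} (hF : MemL c F)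
    {w : ℂ} (hw : polesDiv c (some w) = 0) : F.denom.eval w ≠ 0 := by
  intro hden
  have hord := hF (some w)
  rw [hw, Nat.le_zero, Int.toNat_eq_zero, neg_nonpos] at hord
  have hpos : 0 < F.denom.rootMultiplicity w :=
    rootMultiplicity_pos'.2 ⟨RatFunc.denom_ne_zero F, hden⟩
  have hnum : F.num.IsRoot w := (rootMultiplicity_pos'.1 (by
    change (0 : ℤ) ≤ (F.num.rootMultiplicity w : ℤ) - F.denom.rootMultiplicity w at hord
    omega)).2
  exact (F.num_eval_ne_zero_or_denom_eval_ne_zero w).elim (· hnum) (· hden)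

lemma IsCompact.exists_forall_le_of_lt_one {α : Type*} [TopologicalSpace α] {K : Set α}
    (hK : IsCompact K) {f : α → ℝ} (hf : ContinuousOn f K) (hlt : ∀ x ∈ K, f x < 1) :
    ∃ κ ∈ Set.Ioo (0 : ℝ) 1, ∀ x ∈ K, f x ≤ κ := by
  rcases K.eq_empty_or_nonempty with rfl | hne
  · exact ⟨2⁻¹, by norm_num, by simp⟩
  obtain ⟨x₀, hx₀, hmax⟩ := hK.exists_isMaxOn hne hf
  exact ⟨max (f x₀) 2⁻¹, ⟨by positivity, max_lt (hlt x₀ hx₀) (by norm_num)⟩,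
    fun x hx => (hmax hx).trans (le_max_left _ _)⟩

lemma Complex.norm_ofReal_sub_re_lt {z : ℂ} (hz : z.im ≠ 0) (r : ℝ) :
    ‖(r : ℂ) - z.re‖ < ‖(r : ℂ) - z‖ := by
  rw [← sq_lt_sq₀ (norm_nonneg _) (norm_nonneg _), Complex.sq_norm, Complex.sq_norm,
    Complex.normSq_apply, Complex.normSq_apply]
  simp only [Complex.sub_re, Complex.sub_im, Complex.ofReal_re, Complex.ofReal_im, sub_self,
    mul_zero, add_zero, zero_sub, neg_mul_neg]
  exact lt_add_of_pos_right _ (mul_self_pos.2 hz)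

lemma exists_one_lt_mul_norm_ofReal_sub_re_le {E : Set ℝ} (hE : IsCompact E) {z : ℂ}
    (hz : z.im ≠ 0) : ∃ t : ℝ, 1 < t ∧ ∀ r ∈ E, t * ‖(r : ℂ) - z.re‖ ≤ ‖(r : ℂ) - z‖ := by
  have hz' : ∀ r : ℝ, (r : ℂ) - z ≠ 0 := fun r => norm_pos_iff.1 <|
    (norm_nonneg _).trans_lt (Complex.norm_ofReal_sub_re_lt hz r)
  obtain ⟨κ, ⟨hκ0, hκ1⟩, hκ⟩ := hE.exists_forall_le_of_lt_one
    (f := fun r : ℝ => ‖(r : ℂ) - z.re‖ / ‖(r : ℂ) - z‖) (by fun_prop (disch := simp [hz']))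
    fun r _ => (div_lt_one (norm_pos_iff.2 (hz' r))).2 (Complex.norm_ofReal_sub_re_lt hz r)
  refine ⟨κ⁻¹, (one_lt_inv₀ hκ0).2 hκ1, fun r hr => ?_⟩
  rw [inv_mul_le_iff₀ hκ0]
  exact (div_le_iff₀ (norm_pos_iff.2 (hz' r))).1 (hκ r hr)

lemma IsExtremal.leadVal_re_pos {n : ℕ} {E : Set ℝ} (hE : IsCompact E) {c : Fin n → RLine}
    {F : RatFunc ℂ} (hF : IsExtremal ((fun r : ℝ => (some r : RLine)) '' E) c none F) :
    0 < (leadVal F none (polesDiv c (embR none))).re := by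
  set d := polesDiv c (embR none)
  obtain ⟨B, hB⟩ := hE.exists_bound_of_continuousOn (f := fun r : ℝ => (r : ℂ) ^ d) (by fun_prop)
  set ε : ℝ := (|B| + 1)⁻¹
  have hε : 0 < ε := by positivity
  have hp : C (ε : ℂ) * X ^ d ≠ 0 :=
    mul_ne_zero (C_ne_zero.2 (Complex.ofReal_ne_zero.2 hε.ne')) (pow_ne_zero _ X_ne_zero)
  have hdeg : (C (ε : ℂ) * X ^ d).natDegree = d := by
    rw [natDegree_C_mul_X_pow _ _ (Complex.ofReal_ne_zero.2 hε.ne')]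
  have hmem : MemL c (ι (C (ε : ℂ) * X ^ d) / ι 1) :=
    (memL_div_iff hp one_ne_zero).2
      ⟨by rw [hdeg, natDegree_one, zero_add]; exact le_rfl,
        fun w => by rw [← C_1, rootMultiplicity_C]; exact Nat.zero_le _⟩
  have hbdd : UnitBdd ((fun r : ℝ => (some r : RLine)) '' E) (ι (C (ε : ℂ) * X ^ d) / ι 1) := by
    rintro _ ⟨r, hr, rfl⟩
    rw [evalPt_div_some (by simp)]
    simp only [eval_mul, eval_C, eval_pow, eval_X, eval_one, div_one, norm_mul,
      Complex.norm_real, Real.norm_of_nonneg hε.le]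
    calc ε * ‖(r : ℂ) ^ d‖ ≤ ε * (|B| + 1) := by
          gcongr; exact (hB r hr).trans ((le_abs_self B).trans (le_add_of_nonneg_right zero_le_one))
      _ = 1 := inv_mul_cancel₀ (by positivity)
  have hlead : leadVal (ι (C (ε : ℂ) * X ^ d) / ι 1) none d = ε := by
    rw [leadVal_div_none hp one_ne_zero, if_pos (by simp [hdeg])]
    simp
  calc 0 < ε := hε
    _ = (leadVal (ι (C (ε : ℂ) * X ^ d) / ι 1) none d).re := by rw [hlead, Complex.ofReal_re]
    _ ≤ _ := hF.2.2 _ hmem hbdd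

section ReplaceRoot

variable {P q : ℂ[X]} {z x t : ℂ}

lemma natDegree_C_mul_X_sub_C_mul (ht : t ≠ 0) (hP : P ≠ 0) :
    (C t * ((X - C x) * P)).natDegree = ((X - C z) * P).natDegree := by
  rw [natDegree_C_mul ht, natDegree_mul (X_sub_C_ne_zero x) hP,
    natDegree_mul (X_sub_C_ne_zero z) hP, natDegree_X_sub_C, natDegree_X_sub_C]

lemma MemL.replace_root {n : ℕ} {c : Fin n → RLine} (ht : t ≠ 0) (hP : P ≠ 0)
    (hqz : q.eval z ≠ 0) (hF : MemL c (ι ((X - C z) * P) / ι q)) :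
    MemL c (ι (C t * ((X - C x) * P)) / ι q) := by
  have hq : q ≠ 0 := fun h => hqz (by simp [h])
  have hzP : (X - C z) * P ≠ 0 := mul_ne_zero (X_sub_C_ne_zero z) hP
  have hxP : C t * ((X - C x) * P) ≠ 0 :=
    mul_ne_zero (C_ne_zero.2 ht) (mul_ne_zero (X_sub_C_ne_zero x) hP)
  obtain ⟨hdeg, hroot⟩ := (memL_div_iff hzP hq).1 hF
  refine (memL_div_iff hxP hq).2 ⟨natDegree_C_mul_X_sub_C_mul (z := z) ht hP ▸ hdeg, fun w => ?_⟩
  have hw := hroot w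
  rw [rootMultiplicity_mul hzP, rootMultiplicity_X_sub_C] at hw
  rw [rootMultiplicity_mul hxP, rootMultiplicity_C,
    rootMultiplicity_mul (mul_ne_zero (X_sub_C_ne_zero x) hP)]
  by_cases hwz : w = z
  · subst hwz
    rw [rootMultiplicity_eq_zero hqz]
    exact Nat.zero_le _
  · rw [if_neg hwz] at hw
    omega

lemma leadVal_div_replace_root (ht : t ≠ 0) (hP : P ≠ 0) (hq : q ≠ 0) (d : ℕ) :
    leadVal (ι (C t * ((X - C x) * P)) / ι q) none d =
      t * leadVal (ι ((X - C z) * P) / ι q) none d := by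
  rw [leadVal_div_none (mul_ne_zero (C_ne_zero.2 ht) (mul_ne_zero (X_sub_C_ne_zero x) hP)) hq,
    leadVal_div_none (mul_ne_zero (X_sub_C_ne_zero z) hP) hq,
    natDegree_C_mul_X_sub_C_mul (z := z) ht hP]
  split_ifs
  · simp only [leadingCoeff_mul, leadingCoeff_C, leadingCoeff_X_sub_C, one_mul, mul_div_assoc]
  · rw [mul_zero]

lemma UnitBdd.replace_root {E : Set ℝ} (hqE : ∀ r ∈ E, q.eval (r : ℂ) ≠ 0)
    (ht : ∀ r ∈ E, ‖t‖ * ‖(r : ℂ) - x‖ ≤ ‖(r : ℂ) - z‖)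
    (hF : UnitBdd ((fun r : ℝ => (some r : RLine)) '' E) (ι ((X - C z) * P) / ι q)) :
    UnitBdd ((fun r : ℝ => (some r : RLine)) '' E) (ι (C t * ((X - C x) * P)) / ι q) := by
  rintro _ ⟨r, hr, rfl⟩
  have hFr := hF _ ⟨r, hr, rfl⟩
  rw [evalPt_div_some (hqE r hr)] at hFr ⊢
  refine le_trans ?_ hFr
  simp only [eval_mul, eval_C, eval_sub, eval_X, norm_div, norm_mul, ← mul_assoc]
  gcongr
  exact ht r hr

end ReplaceRoot

lemma IsExtremal.ne_zero {n : ℕ} {E : Set ℝ} (hE : IsCompact E) {c : Fin n → RLine}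
    {F : RatFunc ℂ} (hF : IsExtremal ((fun r : ℝ => (some r : RLine)) '' E) c none F) : F ≠ 0 := by
  rintro rfl
  simpa [leadVal, evalSph] using hF.leadVal_re_pos hE

theorem not_isExtremal_of_root_of_im_ne_zero {n : ℕ} {E : Set ℝ} (hE : IsCompact E)
    {c : Fin n → RLine} {P q : ℂ[X]} {z : ℂ} (hz : z.im ≠ 0) (hP : P ≠ 0) (hqz : q.eval z ≠ 0)
    (hqE : ∀ r ∈ E, q.eval (r : ℂ) ≠ 0) :
    ¬ IsExtremal ((fun r : ℝ => (some r : RLine)) '' E) c none (ι ((X - C z) * P) / ι q) := by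
  intro hF
  obtain ⟨t, ht1, ht⟩ := exists_one_lt_mul_norm_ofReal_sub_re_le hE hz
  have ht0 : 0 < t := zero_lt_one.trans ht1
  have htC : (t : ℂ) ≠ 0 := Complex.ofReal_ne_zero.2 ht0.ne'
  have hG := hF.2.2 _ (hF.1.replace_root (x := z.re) htC hP hqz)
    (hF.2.1.replace_root hqE fun r hr => by simpa [abs_of_pos ht0] using ht r hr)
  rw [leadVal_div_replace_root htC hP (fun h => hqz (by simp [h])), Complex.re_ofReal_mul] at hG
  exact (lt_mul_of_one_lt_left (hF.leadVal_re_pos hE) ht1).not_ge hG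

theorem generalized_zeros_real_general
    {n : ℕ} (E : Set ℝ) (hEc : IsCompact E)
    (c : Fin n → RLine) (hc : ∀ k, c k ∉ (fun r : ℝ => (some r : RLine)) '' E)
    (F : RatFunc ℂ)
    (hF : IsExtremal ((fun r : ℝ => (some r : RLine)) '' E) c (none : RLine) F) :
    ∀ z : ℂ, z.im ≠ 0 → Dn0 c F (some z) = 0 := by
  intro z hz
  have hpoles : polesDiv c (some z) = 0 := polesDiv_some_eq_zero_of_im_ne_zero c hz
  have hdenom : F.denom.eval z ≠ 0 := hF.1.denom_eval_ne_zero hpoles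
  have hnum : F.num.eval z ≠ 0 := by
    intro hroot
    obtain ⟨P, hP⟩ := dvd_iff_isRoot.2 hroot
    have hP0 : P ≠ 0 := right_ne_zero_of_mul (hP ▸ RatFunc.num_ne_zero (hF.ne_zero hEc))
    have hdenomE : ∀ r ∈ E, F.denom.eval (r : ℂ) ≠ 0 := fun r hr =>
      hF.1.denom_eval_ne_zero (polesDiv_some_ofReal_eq_zero c hc hr)
    rw [← RatFunc.num_div_denom F, hP] at hF
    exact not_isExtremal_of_root_of_im_ne_zero hEc hz hP0 hdenom hdenomE hF
  simp [Dn0, ordAt, hpoles, rootMultiplicity_eq_zero hnum, rootMultiplicity_eq_zero hdenom]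

/-- Every generalized zero of the Chebyshev extremizer (extremal point `x_* = ∞`,
`E ⊂ ℝ` compact) is real: off the real line `F_n` has no zeros and no reduction of
pole order, i.e. `D_n^0` vanishes there. -/
theorem generalized_zeros_real
    {n : ℕ} (hn : 1 ≤ n) (E : Set ℝ) (hEc : IsCompact E) (hEinf : E.Infinite)
    (c : Fin n → RLine) (hc : ∀ k, c k ∉ (fun r : ℝ => (some r : RLine)) '' E)
    (F : RatFunc ℂ)
    (hF : IsExtremal ((fun r : ℝ => (some r : RLine)) '' E) c (none : RLine) F) :
    ∀ z : ℂ, z.im ≠ 0 → Dn0 c F (some z) = 0 :=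
  generalized_zeros_real_general E hEc c hc F hF
end
end

section
/- If the extremal function F_n for the rational Chebyshev/residual problem is nonconstant, then its degree as a rational map satisfies deg F_n ≥ ⌈(n+1)/2⌉. -/
noncomputable section
open Polynomial Filter Set MeasureTheory
open scoped Classical


/-!
Suppose `2 deg F ≤ n` and write `F = p / q`. The poles lie on `ℝ̄`, so `q` is real on `ℝ`,
and `N = defect F = q² - p p̄` is a nonzero polynomial (`F` is not constant) of degree
`≤ 2 deg F ≤ n` with `N = |q|² (1 - |F|²)` on `E ∩ ℝ`. Dividing `N` by its zero at `x_*` (or,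
for `x_* = ∞`, multiplying it by a power of `X` up to degree `n`) gives a numerator `P` such
that `G = P / polePoly c ∈ L(D_n^∞)` has nonzero leading value at `x_*` and
`|G| ≤ K (1 - |F|²)` on `E`; at `∞ ∈ E` with `|F(∞)| = 1` this uses `deg N < n`, read off
from the cancelling top coefficients of `q²` and `p p̄`. Hence `F + σ G` stays admissible for
small `σ`, and a suitable argument of `σ` increases `Re leadVal`, contradicting extremality.
-/

namespace RationalExtremal

open OnePoint ComplexConjugate

section Unfold

@[simp] theorem embR_coe (r : ℝ) : embR r = ((r : ℂ) : Sph) := rfl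

@[simp] theorem embR_infty : embR ∞ = ∞ := rfl

theorem ordAt_coe (F : RatFunc ℂ) (z : ℂ) :
    ordAt F z = (F.num.rootMultiplicity z : ℤ) - F.denom.rootMultiplicity z := rfl

theorem ordAt_infty (F : RatFunc ℂ) : ordAt F ∞ = (F.denom.natDegree : ℤ) - F.num.natDegree := rfl

theorem evalSph_coe (F : RatFunc ℂ) (z : ℂ) :
    evalSph F z = if F.denom.eval z = 0 then ∞ else ((F.num.eval z / F.denom.eval z : ℂ) : Sph) :=
  rfl

theorem evalSph_infty (F : RatFunc ℂ) :
    evalSph F ∞ = if F.denom.natDegree < F.num.natDegree then ∞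
      else ((if F.num.natDegree = F.denom.natDegree then
        F.num.leadingCoeff / F.denom.leadingCoeff else 0 : ℂ) : Sph) :=
  rfl

theorem evalPt_eq (F : RatFunc ℂ) (x : RLine) : evalPt F x = (evalSph F (embR x)).getD 0 := rfl

theorem leadVal_coe (F : RatFunc ℂ) (r : ℝ) (d : ℕ) :
    leadVal F r d = (evalSph (F * (RatFunc.C (r : ℂ) - RatFunc.X) ^ d) (r : ℂ)).getD 0 := rfl

theorem leadVal_infty (F : RatFunc ℂ) (d : ℕ) :
    leadVal F ∞ d = (evalSph (F / RatFunc.X ^ d) ∞).getD 0 := rfl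

theorem getD_coe (z : ℂ) : ((z : Sph) : Option ℂ).getD 0 = z := rfl

end Unfold

section RatFuncMk

variable {K : Type*} [Field K] {h q : K[X]}

theorem num_mul_eq_mul_denom_mk (hq : q ≠ 0) :
    (RatFunc.mk h q).num * q = h * (RatFunc.mk h q).denom :=
  (RatFunc.num_mul_eq_mul_denom_iff hq).2 (RatFunc.mk_eq_div h q)

theorem denom_mk_dvd (h q : K[X]) : (RatFunc.mk h q).denom ∣ q := by
  rw [RatFunc.mk_eq_div]; exact RatFunc.denom_div_dvd h q

theorem mk_num_denom (F : RatFunc K) : RatFunc.mk F.num F.denom = F := by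
  rw [RatFunc.mk_eq_div, RatFunc.num_div_denom]

theorem mk_mul_right {t : K[X]} (ht : t ≠ 0) : RatFunc.mk (h * t) (q * t) = RatFunc.mk h q := by
  rw [RatFunc.mk_eq_div, RatFunc.mk_eq_div, map_mul, map_mul,
    mul_div_mul_right _ _ (RatFunc.algebraMap_ne_zero ht)]

theorem mk_mul_algebraMap (s : K[X]) :
    RatFunc.mk h q * algebraMap K[X] (RatFunc K) s = RatFunc.mk (h * s) q := by
  rw [RatFunc.mk_eq_div, RatFunc.mk_eq_div, map_mul, div_mul_eq_mul_div]

theorem mk_div_algebraMap (s : K[X]) :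
    RatFunc.mk h q / algebraMap K[X] (RatFunc K) s = RatFunc.mk h (q * s) := by
  rw [RatFunc.mk_eq_div, RatFunc.mk_eq_div, map_mul, div_div]

theorem mk_add_C_mul (P : K[X]) (σ : K) :
    RatFunc.mk (h + C σ * P) q = RatFunc.mk h q + RatFunc.C σ * RatFunc.mk P q := by
  simp only [RatFunc.mk_eq_div, map_add, map_mul, RatFunc.algebraMap_C, add_div, mul_div_assoc]

end RatFuncMk

section Evaluation

variable {h q : ℂ[X]}

theorem evalSph_mk_coe {z : ℂ} (hz : q.eval z ≠ 0) :
    evalSph (RatFunc.mk h q) z = ((h.eval z / q.eval z : ℂ) : Sph) := by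
  have hq : q ≠ 0 := fun h0 => hz (by rw [h0, eval_zero])
  obtain ⟨t, ht⟩ := denom_mk_dvd h q
  have hdz : (RatFunc.mk h q).denom.eval z ≠ 0 := fun h0 => hz (by rw [ht, eval_mul, h0, zero_mul])
  have hcross := congrArg (eval z) (num_mul_eq_mul_denom_mk (h := h) hq)
  rw [eval_mul, eval_mul] at hcross
  rw [evalSph_coe, if_neg hdz, coe_eq_coe, div_eq_div_iff hdz hz, hcross]

theorem evalSph_mk_infty (hq : q ≠ 0) (hdeg : h.natDegree ≤ q.natDegree) :
    evalSph (RatFunc.mk h q) ∞ = ((h.coeff q.natDegree / q.leadingCoeff : ℂ) : Sph) := by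
  obtain rfl | h0 := eq_or_ne h 0
  · simp [evalSph_infty, RatFunc.mk_eq_div]
  set F := RatFunc.mk h q
  have hcross : F.num * q = h * F.denom := num_mul_eq_mul_denom_mk hq
  have hF0 : F.num ≠ 0 := fun h' => by
    rw [h', zero_mul, eq_comm, mul_eq_zero] at hcross
    exact hcross.elim h0 F.denom_ne_zero
  have hdegs := congrArg natDegree hcross
  rw [natDegree_mul hF0 hq, natDegree_mul h0 F.denom_ne_zero] at hdegs
  rw [evalSph_infty]
  rcases hdeg.lt_or_eq with hlt | heq
  · rw [if_neg (by omega), if_neg (by omega), coeff_eq_zero_of_natDegree_lt hlt, zero_div]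
  · have hlc := congrArg leadingCoeff hcross
    rw [leadingCoeff_mul, leadingCoeff_mul] at hlc
    rw [if_neg (by omega), if_pos (by omega), ← heq, coeff_natDegree, coe_eq_coe,
      div_eq_div_iff (leadingCoeff_ne_zero.2 F.denom_ne_zero) (leadingCoeff_ne_zero.2 hq), hlc]

theorem evalPt_mk_coe {r : ℝ} (hr : q.eval (r : ℂ) ≠ 0) :
    evalPt (RatFunc.mk h q) r = h.eval (r : ℂ) / q.eval (r : ℂ) := by
  rw [evalPt_eq, embR_coe, evalSph_mk_coe hr, getD_coe]

theorem evalPt_mk_infty (hq : q ≠ 0) (hdeg : h.natDegree ≤ q.natDegree) :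
    evalPt (RatFunc.mk h q) ∞ = h.coeff q.natDegree / q.leadingCoeff := by
  rw [evalPt_eq, embR_infty, evalSph_mk_infty hq hdeg, getD_coe]

theorem evalPt_coe_of_eval_denom_ne_zero {F : RatFunc ℂ} {r : ℝ}
    (hr : F.denom.eval (r : ℂ) ≠ 0) :
    evalPt F r = F.num.eval (r : ℂ) / F.denom.eval (r : ℂ) := by
  conv_lhs => rw [← mk_num_denom F]
  exact evalPt_mk_coe hr

end Evaluation

section PolePoly

def poleFactor : RLine → ℂ[X]
  | ∞ => 1
  | (r : ℝ) => X - C (r : ℂ)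

theorem poleFactor_monic (o : RLine) : (poleFactor o).Monic := by
  cases o using OnePoint.rec with
  | infty => exact monic_one
  | coe r => exact monic_X_sub_C _

theorem count_roots_poleFactor (o : RLine) (z : ℂ) :
    (poleFactor o).roots.count z = if embR o = z then 1 else 0 := by
  cases o using OnePoint.rec with
  | infty => simp [poleFactor]
  | coe r => simp [poleFactor, Multiset.count_singleton, eq_comm]

theorem natDegree_poleFactor (o : RLine) :
    (poleFactor o).natDegree = if embR o = ∞ then 0 else 1 := by
  cases o using OnePoint.rec with
  | infty => simp [poleFactor]
  | coe r => simp [poleFactor]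

variable {n : ℕ} (c : Fin n → RLine)

/-- `L(D_n^∞) = {h / polePoly c : deg h ≤ n}`. -/
def polePoly : ℂ[X] := ∏ k, poleFactor (c k)

theorem polePoly_monic : (polePoly c).Monic :=
  monic_prod_of_monic _ _ fun k _ => poleFactor_monic (c k)

theorem polePoly_ne_zero : polePoly c ≠ 0 := (polePoly_monic c).ne_zero

theorem rootMultiplicity_polePoly (z : ℂ) :
    (polePoly c).rootMultiplicity z = polesDiv c z := by
  rw [← count_roots, polePoly, roots_prod _ _ (polePoly_ne_zero c), Multiset.count_bind]
  simp only [count_roots_poleFactor, polesDiv, Finset.card_filter]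
  rfl

theorem natDegree_polePoly_add_polesDiv_infty :
    (polePoly c).natDegree + polesDiv c ∞ = n := by
  rw [polePoly, natDegree_prod_of_monic _ _ fun k _ => poleFactor_monic (c k)]
  unfold polesDiv
  simp only [natDegree_poleFactor, Finset.sum_ite, Finset.sum_const_zero, Finset.sum_const,
    smul_eq_mul, mul_one, zero_add]
  simpa [add_comm] using Finset.card_filter_add_card_filter_not (s := Finset.univ)
    (p := fun k => embR (c k) = ∞)

variable {c} {E : Set RLine}

theorem polesDiv_infty_eq_zero (hc : ∀ k, c k ∉ E) (hinf : ∞ ∈ E) : polesDiv c ∞ = 0 := by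
  unfold polesDiv
  rw [Finset.card_eq_zero, Finset.filter_eq_empty_iff]
  intro k _ hk
  cases hck : c k using OnePoint.rec with
  | infty => exact hc k (hck ▸ hinf)
  | coe r => simp [hck] at hk

theorem natDegree_polePoly (hc : ∀ k, c k ∉ E) (hinf : ∞ ∈ E) : (polePoly c).natDegree = n := by
  simpa [polesDiv_infty_eq_zero hc hinf] using natDegree_polePoly_add_polesDiv_infty c

theorem polePoly_eval_ne_zero (hc : ∀ k, c k ∉ E) {r : ℝ} (hr : (r : RLine) ∈ E) :
    (polePoly c).eval (r : ℂ) ≠ 0 := by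
  rw [polePoly, eval_prod, Finset.prod_ne_zero_iff]
  intro k _
  cases hck : c k using OnePoint.rec with
  | infty => simp [poleFactor]
  | coe s =>
    simp only [poleFactor, eval_sub, eval_X, eval_C, sub_ne_zero, ne_eq, Complex.ofReal_inj]
    rintro rfl
    exact hc k (hck ▸ hr)

theorem conj_eq_of_isRoot_polePoly {z : ℂ} (hz : (polePoly c).IsRoot z) : conj z = z := by
  rw [IsRoot, polePoly, eval_prod, Finset.prod_eq_zero_iff] at hz
  obtain ⟨k, -, hk⟩ := hz
  cases hck : c k using OnePoint.rec with
  | infty => simp [hck, poleFactor] at hk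
  | coe r =>
    simp only [hck, poleFactor, eval_sub, eval_X, eval_C, sub_eq_zero] at hk
    rw [hk, Complex.conj_ofReal]

end PolePoly

section MemL

variable {n : ℕ} {c : Fin n → RLine} {F G : RatFunc ℂ}

theorem memL_mk {h : ℂ[X]} (hdeg : h.natDegree ≤ n) : MemL c (RatFunc.mk h (polePoly c)) := by
  have hcross := num_mul_eq_mul_denom_mk (h := h) (polePoly_ne_zero c)
  have hdvd := denom_mk_dvd h (polePoly c)
  generalize RatFunc.mk h (polePoly c) = F at hcross hdvd
  intro x
  cases x using OnePoint.rec with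
  | infty =>
    rw [ordAt_infty]
    have hq := natDegree_polePoly_add_polesDiv_infty c
    obtain hF | hF := eq_or_ne F.num 0
    · rw [hF, natDegree_zero]; omega
    have hdegs := congrArg natDegree hcross
    rw [natDegree_mul hF (polePoly_ne_zero c)] at hdegs
    have := hdegs.trans_le natDegree_mul_le
    omega
  | coe z =>
    rw [ordAt_coe]
    have := rootMultiplicity_le_rootMultiplicity_of_dvd (polePoly_ne_zero c) hdvd z
    rw [rootMultiplicity_polePoly] at this
    omega

theorem denom_dvd_polePoly (hF : MemL c F) : F.denom ∣ polePoly c := by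
  rw [IsAlgClosed.dvd_iff_roots_le_roots F.denom_ne_zero (polePoly_ne_zero c),
    Multiset.le_iff_count]
  intro z
  rw [count_roots, count_roots, rootMultiplicity_polePoly]
  have hz := hF z
  rw [ordAt_coe] at hz
  by_cases hroot : F.denom.IsRoot z
  · have hnum : ¬F.num.IsRoot z := fun hnum => by
      obtain ⟨u, v, huv⟩ := F.isCoprime_num_denom
      simpa [hnum.eq_zero, hroot.eq_zero] using congrArg (eval z) huv
    rw [rootMultiplicity_eq_zero hnum] at hz
    omega
  · rw [rootMultiplicity_eq_zero hroot]
    exact Nat.zero_le _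

theorem exists_eq_mk_polePoly (hF : MemL c F) :
    ∃ β : ℂ[X], polePoly c = F.denom * β ∧ F = RatFunc.mk (F.num * β) (polePoly c) ∧
      (F.num * β).natDegree ≤ n := by
  obtain ⟨β, hβ⟩ := denom_dvd_polePoly hF
  have hβ0 : β ≠ 0 := right_ne_zero_of_mul (hβ ▸ polePoly_ne_zero c)
  refine ⟨β, hβ, by rw [hβ, mk_mul_right hβ0, mk_num_denom], ?_⟩
  obtain hnum | hnum := eq_or_ne F.num 0
  · simp [hnum]
  have hdeg := congrArg natDegree hβ
  rw [natDegree_mul F.denom_ne_zero hβ0] at hdeg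
  have hinf := hF ∞
  rw [ordAt_infty] at hinf
  have := natDegree_polePoly_add_polesDiv_infty c
  rw [natDegree_mul hnum hβ0]
  omega

theorem exists_mk_polePoly_eq (hF : MemL c F) :
    ∃ h : ℂ[X], h.natDegree ≤ n ∧ RatFunc.mk h (polePoly c) = F := by
  obtain ⟨β, -, hF', hdeg⟩ := exists_eq_mk_polePoly hF
  exact ⟨_, hdeg, hF'.symm⟩

theorem MemL.add_C_mul (hF : MemL c F) (hG : MemL c G) (σ : ℂ) :
    MemL c (F + RatFunc.C σ * G) := by
  obtain ⟨h, hh, rfl⟩ := exists_mk_polePoly_eq hF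
  obtain ⟨P, hP, rfl⟩ := exists_mk_polePoly_eq hG
  rw [← mk_add_C_mul]
  exact memL_mk (natDegree_add_le_of_degree_le hh ((natDegree_C_mul_le σ P).trans hP))

theorem conj_eval_ofReal_of_dvd_polePoly {u : ℂ[X]} (hu : u.Monic) (hdvd : u ∣ polePoly c)
    (r : ℝ) : conj (u.eval (r : ℂ)) = u.eval (r : ℂ) := by
  rw [(IsAlgClosed.splits u).eq_prod_roots_of_monic hu, eval_multiset_prod, Multiset.map_map,
    map_multiset_prod, Multiset.map_map]
  congr 1
  refine Multiset.map_congr rfl fun a ha => ?_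
  have hroot : (polePoly c).IsRoot a := by
    obtain ⟨t, ht⟩ := hdvd
    simp [IsRoot, ht, (isRoot_of_mem_roots ha).eq_zero]
  simp [conj_eq_of_isRoot_polePoly hroot]

theorem evalPt_mk_polePoly_infty {E : Set RLine} (hc : ∀ k, c k ∉ E) (hinf : ∞ ∈ E)
    {h : ℂ[X]} (hh : h.natDegree ≤ n) : evalPt (RatFunc.mk h (polePoly c)) ∞ = h.coeff n := by
  have hdeg := natDegree_polePoly hc hinf
  rw [evalPt_mk_infty (polePoly_ne_zero c) (hh.trans hdeg.ge), hdeg,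
    (polePoly_monic c).leadingCoeff, div_one]

theorem evalPt_add_C_mul {E : Set RLine} (hc : ∀ k, c k ∉ E) {x : RLine} (hx : x ∈ E)
    (hF : MemL c F) (hG : MemL c G) (σ : ℂ) :
    evalPt (F + RatFunc.C σ * G) x = evalPt F x + σ * evalPt G x := by
  obtain ⟨h, hh, rfl⟩ := exists_mk_polePoly_eq hF
  obtain ⟨P, hP, rfl⟩ := exists_mk_polePoly_eq hG
  rw [← mk_add_C_mul]
  cases x using OnePoint.rec with
  | infty =>
    rw [evalPt_mk_polePoly_infty hc hx
        (natDegree_add_le_of_degree_le hh ((natDegree_C_mul_le σ P).trans hP)),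
      evalPt_mk_polePoly_infty hc hx hh, evalPt_mk_polePoly_infty hc hx hP, coeff_add,
      coeff_C_mul]
  | coe r =>
    have hr := polePoly_eval_ne_zero hc hx
    rw [evalPt_mk_coe hr, evalPt_mk_coe hr, evalPt_mk_coe hr, eval_add, eval_mul, eval_C,
      add_div, mul_div_assoc]

theorem leadVal_mk_polePoly_coe (h : ℂ[X]) (r : ℝ) :
    leadVal (RatFunc.mk h (polePoly c)) r (polesDiv c (embR r)) =
      (-1) ^ (polePoly c).rootMultiplicity (r : ℂ) * h.eval (r : ℂ) /
        ((polePoly c) /ₘ (X - C (r : ℂ)) ^ (polePoly c).rootMultiplicity (r : ℂ)).eval (r : ℂ) := by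
  rw [embR_coe, ← rootMultiplicity_polePoly]
  set m := (polePoly c).rootMultiplicity (r : ℂ)
  set q := (polePoly c) /ₘ (X - C (r : ℂ)) ^ m
  have hq : q.eval (r : ℂ) ≠ 0 :=
    eval_divByMonic_pow_rootMultiplicity_ne_zero _ (polePoly_ne_zero c)
  have hfactor : polePoly c = q * (X - C (r : ℂ)) ^ m := by
    rw [mul_comm]; exact (pow_mul_divByMonic_rootMultiplicity_eq _ _).symm
  have hsign : h * (C (r : ℂ) - X) ^ m = (h * (-1) ^ m) * (X - C (r : ℂ)) ^ m := by
    rw [← neg_sub, neg_pow]; ring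
  rw [leadVal_coe, ← RatFunc.algebraMap_C, ← RatFunc.algebraMap_X, ← map_sub, ← map_pow,
    mk_mul_algebraMap, hsign, hfactor, mk_mul_right (pow_ne_zero _ (X_sub_C_ne_zero _)),
    evalSph_mk_coe hq, getD_coe]
  simp only [eval_mul, eval_pow, eval_neg, eval_one]
  ring

theorem leadVal_mk_polePoly_infty {h : ℂ[X]} (hh : h.natDegree ≤ n) :
    leadVal (RatFunc.mk h (polePoly c)) ∞ (polesDiv c (embR ∞)) = h.coeff n := by
  set d := polesDiv c ∞
  have hmonic : (polePoly c * X ^ d).Monic := (polePoly_monic c).mul (monic_X_pow d)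
  have hdeg : (polePoly c * X ^ d).natDegree = n := by
    rw [(polePoly_monic c).natDegree_mul (monic_X_pow d), natDegree_X_pow,
      natDegree_polePoly_add_polesDiv_infty]
  rw [embR_infty, leadVal_infty, ← RatFunc.algebraMap_X, ← map_pow, mk_div_algebraMap,
    evalSph_mk_infty hmonic.ne_zero (hh.trans hdeg.ge), hdeg, hmonic.leadingCoeff, div_one,
    getD_coe]

theorem leadVal_add_C_mul (hF : MemL c F) (hG : MemL c G) (σ : ℂ) (xs : RLine) :
    leadVal (F + RatFunc.C σ * G) xs (polesDiv c (embR xs)) =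
      leadVal F xs (polesDiv c (embR xs)) + σ * leadVal G xs (polesDiv c (embR xs)) := by
  obtain ⟨h, hh, rfl⟩ := exists_mk_polePoly_eq hF
  obtain ⟨P, hP, rfl⟩ := exists_mk_polePoly_eq hG
  rw [← mk_add_C_mul]
  cases xs using OnePoint.rec with
  | infty =>
    rw [leadVal_mk_polePoly_infty
        (natDegree_add_le_of_degree_le hh ((natDegree_C_mul_le σ P).trans hP)),
      leadVal_mk_polePoly_infty hh, leadVal_mk_polePoly_infty hP, coeff_add, coeff_C_mul]
  | coe r =>
    simp only [leadVal_mk_polePoly_coe, eval_add, eval_mul, eval_C]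
    ring

end MemL

section Bounds

theorem exists_norm_eval_le_mul_of_isCompact {K : Set ℝ} (hK : IsCompact K) (A B : ℂ[X])
    (hB : ∀ r ∈ K, B.eval (r : ℂ) ≠ 0) :
    ∃ C, ∀ r ∈ K, ‖A.eval (r : ℂ)‖ ≤ C * ‖B.eval (r : ℂ)‖ := by
  have hcont : ContinuousOn (fun r : ℝ => A.eval (r : ℂ) / B.eval (r : ℂ)) K :=
    (A.continuous.comp Complex.continuous_ofReal).continuousOn.div
      (B.continuous.comp Complex.continuous_ofReal).continuousOn hB
  obtain ⟨C, hC⟩ := hK.exists_bound_of_continuousOn hcont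
  refine ⟨C, fun r hr => ?_⟩
  have := hC r hr
  rwa [norm_div, div_le_iff₀ (norm_pos_iff.2 (hB r hr))] at this

theorem exists_norm_eval_le_mul_of_isClosed {K : Set ℝ} (hK : IsClosed K) {A B : ℂ[X]}
    (hB : ∀ r ∈ K, B.eval (r : ℂ) ≠ 0) (hdeg : A.degree ≤ B.degree) :
    ∃ C, ∀ r ∈ K, ‖A.eval (r : ℂ)‖ ≤ C * ‖B.eval (r : ℂ)‖ := by
  obtain ⟨C₁, hC₁⟩ := ((isBigO_cobounded_of_degree_le hdeg).comp_tendsto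
    (RCLike.tendsto_ofReal_cobounded_cobounded ℂ)).bound
  obtain ⟨R, -, hR⟩ := (Metric.hasBasis_cobounded_compl_closedBall (0 : ℝ)).eventually_iff.1 hC₁
  obtain ⟨C₂, hC₂⟩ := exists_norm_eval_le_mul_of_isCompact
    ((isCompact_closedBall 0 R).inter_left hK) A B fun r hr => hB r hr.1
  refine ⟨max C₁ C₂, fun r hr => ?_⟩
  by_cases hrR : r ∈ Metric.closedBall 0 R
  · exact (hC₂ r ⟨hr, hrR⟩).trans (mul_le_mul_of_nonneg_right (le_max_right _ _) (norm_nonneg _))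
  · exact (hR hrR).trans (mul_le_mul_of_nonneg_right (le_max_left _ _) (norm_nonneg _))

theorem exists_norm_eval_le_mul_on_closed {E : Set RLine} (hE : IsClosed E) {A B : ℂ[X]}
    (hB : ∀ r : ℝ, (r : RLine) ∈ E → B.eval (r : ℂ) ≠ 0) (hdeg : ∞ ∈ E → A.degree ≤ B.degree) :
    ∃ C, ∀ r : ℝ, (r : RLine) ∈ E → ‖A.eval (r : ℂ)‖ ≤ C * ‖B.eval (r : ℂ)‖ := by
  by_cases hinf : ∞ ∈ E
  · exact exists_norm_eval_le_mul_of_isClosed (hE.preimage continuous_coe) hB (hdeg hinf)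
  · exact exists_norm_eval_le_mul_of_isCompact ((isClosed_iff_of_notMem hinf).1 hE).2 A B hB

theorem norm_add_mul_le_one {f k σ : ℂ} {C : ℝ} (hf : ‖f‖ ≤ 1) (hk : ‖k‖ ≤ C * (1 - ‖f‖ ^ 2))
    (hσ : 3 * (‖σ‖ * C) ≤ 1) : ‖f + σ * k‖ ≤ 1 := by
  set δ := 1 - ‖f‖ ^ 2
  have hδ : 0 ≤ δ := by nlinarith [norm_nonneg f]
  have hu : ‖σ‖ * ‖k‖ ≤ ‖σ‖ * C * δ := by
    rw [mul_assoc]; exact mul_le_mul_of_nonneg_left hk (norm_nonneg σ)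
  have hu0 : 0 ≤ ‖σ‖ * ‖k‖ := by positivity
  have hsum : ‖f‖ + ‖σ‖ * ‖k‖ ≤ 1 := by
    nlinarith [norm_nonneg f, mul_le_mul_of_nonneg_right hσ hδ]
  calc ‖f + σ * k‖ ≤ ‖f‖ + ‖σ * k‖ := norm_add_le _ _
    _ = ‖f‖ + ‖σ‖ * ‖k‖ := by rw [norm_mul]
    _ ≤ 1 := hsum

theorem exists_norm_le_mul_one_sub_sq_norm {a b : ℂ} (ha : ‖a‖ ≤ 1) (hb : ‖a‖ = 1 → b = 0) :
    ∃ C, ‖b‖ ≤ C * (1 - ‖a‖ ^ 2) := by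
  rcases ha.eq_or_lt with h1 | hlt
  · exact ⟨0, by simp [hb h1]⟩
  · have hpos : 0 < 1 - ‖a‖ ^ 2 := by nlinarith [norm_nonneg a]
    exact ⟨‖b‖ / (1 - ‖a‖ ^ 2), (div_mul_cancel₀ _ hpos.ne').ge⟩

theorem exists_norm_le_re_mul_pos {a : ℂ} (ha : a ≠ 0) {t : ℝ} (ht : 0 < t) :
    ∃ σ : ℂ, ‖σ‖ ≤ t ∧ 0 < (σ * a).re := by
  refine ⟨(t / ‖a‖ : ℝ) * conj a, ?_, ?_⟩
  · rw [norm_mul, Complex.norm_real, Complex.norm_conj, Real.norm_of_nonneg (by positivity),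
      div_mul_cancel₀ _ (norm_ne_zero_iff.2 ha)]
  · rw [mul_assoc, Complex.conj_mul', ← Complex.ofReal_pow, ← Complex.ofReal_mul,
      Complex.ofReal_re]
    have := norm_pos_iff.2 ha
    positivity

end Bounds

section Defect

/-- Wherever `F.denom` is real on `ℝ`, this equals `|F.denom|² (1 - |F|²)` there. -/
def defect (F : RatFunc ℂ) : ℂ[X] := F.denom ^ 2 - F.num * F.num.map (starRingEnd ℂ)

variable {F : RatFunc ℂ}

theorem natDegree_map_conj (p : ℂ[X]) : (p.map (starRingEnd ℂ)).natDegree = p.natDegree :=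
  natDegree_map_eq_of_injective (RingHom.injective _) p

theorem eval_map_conj_ofReal (p : ℂ[X]) (r : ℝ) :
    (p.map (starRingEnd ℂ)).eval (r : ℂ) = conj (p.eval (r : ℂ)) := by
  rw [eval_map, ← Complex.conj_ofReal r, eval₂_at_apply, Complex.conj_ofReal]

theorem defect_ne_zero (hF : ∀ a : ℂ, F ≠ RatFunc.C a) : defect F ≠ 0 := by
  intro h0
  have hsq : F.denom * F.denom = F.num * F.num.map (starRingEnd ℂ) := by
    rw [← sq]; exact sub_eq_zero.1 h0
  have hcop := F.isCoprime_num_denom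
  obtain ⟨a, ha⟩ := Polynomial.isUnit_iff.1 <|
    (hcop.mul_right hcop).isUnit_of_dvd' dvd_rfl ⟨_, hsq⟩
  have hnum : F.num.natDegree = 0 := by rw [← ha.2]; exact natDegree_C a
  have hdenom : F.denom = 1 := by
    refine F.monic_denom.natDegree_eq_zero.1 ?_
    have := congrArg natDegree hsq
    rw [natDegree_mul F.denom_ne_zero F.denom_ne_zero] at this
    have := this.trans_le natDegree_mul_le
    rw [natDegree_map_conj, hnum] at this
    omega
  apply hF a
  rw [← F.num_div_denom, hdenom, ← ha.2, RatFunc.algebraMap_C, map_one, div_one]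

theorem natDegree_defect_le :
    (defect F).natDegree ≤ 2 * max F.num.natDegree F.denom.natDegree := by
  refine (natDegree_sub_le _ _).trans (max_le ?_ ?_)
  · exact natDegree_pow_le.trans (by omega)
  · refine natDegree_mul_le.trans ?_
    rw [natDegree_map_conj]
    omega

theorem eval_defect_ofReal {r : ℝ} (hq : conj (F.denom.eval (r : ℂ)) = F.denom.eval (r : ℂ)) :
    (defect F).eval (r : ℂ) =
      ((‖F.denom.eval (r : ℂ)‖ ^ 2 - ‖F.num.eval (r : ℂ)‖ ^ 2 : ℝ) : ℂ) := by
  rw [defect, eval_sub, eval_pow, eval_mul, eval_map_conj_ofReal, Complex.mul_conj', sq,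
    ← congrArg (_ * ·) hq, Complex.mul_conj']
  push_cast
  ring

theorem natDegree_defect_lt (hdeg : F.num.natDegree = F.denom.natDegree)
    (hlc : ‖F.num.leadingCoeff‖ = 1) (h0 : defect F ≠ 0) :
    (defect F).natDegree < 2 * F.num.natDegree := by
  set m := F.num.natDegree
  have hle : (defect F).natDegree ≤ 2 * m := natDegree_defect_le.trans (by omega)
  have hcoeff : (defect F).coeff (2 * m) = 0 := by
    have hq : (F.denom ^ 2).coeff (2 * m) = 1 := by
      rw [hdeg, coeff_pow_mul_natDegree, F.monic_denom.leadingCoeff, one_pow]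
    have hp : (F.num * F.num.map (starRingEnd ℂ)).coeff (2 * m) = 1 := by
      have := coeff_mul_degree_add_degree F.num (F.num.map (starRingEnd ℂ))
      rw [natDegree_map_conj, leadingCoeff_map_of_injective (RingHom.injective _),
        Complex.mul_conj', hlc, ← two_mul] at this
      simpa using this
    rw [defect, coeff_sub, hq, hp, sub_self]
  refine hle.lt_of_ne fun heq => h0 ?_
  rw [← leadingCoeff_eq_zero, leadingCoeff, heq, hcoeff]

end Defect

section Domination

variable {n : ℕ} {E : Set RLine} {c : Fin n → RLine} {F G : RatFunc ℂ}

def GapDominated (E : Set RLine) (F G : RatFunc ℂ) : Prop :=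
  ∃ K : ℝ, ∀ x ∈ E, ‖evalPt G x‖ ≤ K * (1 - ‖evalPt F x‖ ^ 2)

theorem GapDominated.exists_unitBdd_add_C_mul (hG : GapDominated E F G) (hc : ∀ k, c k ∉ E)
    (hFmem : MemL c F) (hGmem : MemL c G) (hUB : UnitBdd E F) :
    ∃ t₀ > 0, ∀ σ : ℂ, ‖σ‖ ≤ t₀ → UnitBdd E (F + RatFunc.C σ * G) := by
  obtain ⟨K, hK⟩ := hG
  refine ⟨1 / (3 * (|K| + 1)), by positivity, fun σ hσ x hx => ?_⟩
  rw [evalPt_add_C_mul hc hx hFmem hGmem]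
  refine norm_add_mul_le_one (hUB x hx) (hK x hx) ?_
  rw [le_div_iff₀ (by positivity)] at hσ
  nlinarith [norm_nonneg σ, le_abs_self K]

theorem one_sub_sq_norm_evalPt_coe {r : ℝ} (hq : F.denom.eval (r : ℂ) ≠ 0)
    (hreal : conj (F.denom.eval (r : ℂ)) = F.denom.eval (r : ℂ)) (hF : ‖evalPt F r‖ ≤ 1) :
    1 - ‖evalPt F r‖ ^ 2 = ‖(defect F).eval (r : ℂ)‖ / ‖F.denom.eval (r : ℂ)‖ ^ 2 := by
  have hb := norm_pos_iff.2 hq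
  rw [evalPt_coe_of_eval_denom_ne_zero hq, norm_div, div_le_one hb] at *
  rw [eval_defect_ofReal hreal, Complex.norm_real,
    Real.norm_of_nonneg (by nlinarith [norm_nonneg (F.num.eval (r : ℂ))])]
  field_simp

/-- On `E ∩ ℝ`, `1 - |F|² = |defect F| / |F.denom|²`, so the bound reduces to boundedness of
`w F.denom² / (ξ polePoly c)`, which `hw` ensures near `∞`. -/
theorem exists_bound_evalPt_coe (hE : IsClosed E) (hc : ∀ k, c k ∉ E) (hmem : MemL c F)
    (hUB : UnitBdd E F) {P ξ w : ℂ[X]} (hPN : ξ * P = defect F * w)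
    (hξ : ∀ r : ℝ, (r : RLine) ∈ E → ξ.eval (r : ℂ) ≠ 0)
    (hw : ∞ ∈ E → (w * F.denom ^ 2).degree ≤ (ξ * polePoly c).degree) :
    ∃ K, ∀ r : ℝ, (r : RLine) ∈ E →
      ‖evalPt (RatFunc.mk P (polePoly c)) r‖ ≤ K * (1 - ‖evalPt F r‖ ^ 2) := by
  obtain ⟨β, hβ, -⟩ := exists_eq_mk_polePoly hmem
  have hreal := conj_eval_ofReal_of_dvd_polePoly F.monic_denom (denom_dvd_polePoly hmem)
  obtain ⟨K, hK⟩ := exists_norm_eval_le_mul_on_closed hE (fun r hr => by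
    rw [eval_mul]; exact mul_ne_zero (hξ r hr) (polePoly_eval_ne_zero hc hr)) hw
  refine ⟨K, fun r hr => ?_⟩
  have hqp := polePoly_eval_ne_zero hc hr
  obtain ⟨hq, hβr⟩ : F.denom.eval (r : ℂ) ≠ 0 ∧ β.eval (r : ℂ) ≠ 0 := by
    rwa [hβ, eval_mul, mul_ne_zero_iff] at hqp
  rw [one_sub_sq_norm_evalPt_coe hq (hreal r) (hUB r hr), evalPt_mk_coe hqp, hβ]
  have hKr := hK r hr
  have hPNr := congrArg (‖eval (r : ℂ) ·‖) hPN
  simp only [eval_mul, eval_pow, norm_mul, norm_pow, norm_div, hβ] at hKr hPNr ⊢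
  have hb := norm_pos_iff.2 hq
  have hx := norm_pos_iff.2 (hξ r hr)
  rw [div_le_iff₀ (by positivity), mul_div_assoc', div_mul_eq_mul_div,
    le_div_iff₀ (by positivity)]
  refine le_of_mul_le_mul_left ?_ hx
  nlinarith [mul_le_mul_of_nonneg_left hKr (norm_nonneg ((defect F).eval (r : ℂ)))]

theorem exists_bound_evalPt_infty (hc : ∀ k, c k ∉ E) (hUB : UnitBdd E F) {P : ℂ[X]}
    (hP : P.natDegree ≤ n) (hcoeff : ∞ ∈ E → ‖evalPt F ∞‖ = 1 → P.coeff n = 0) :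
    ∃ K, ∞ ∈ E → ‖evalPt (RatFunc.mk P (polePoly c)) ∞‖ ≤ K * (1 - ‖evalPt F ∞‖ ^ 2) := by
  by_cases hinf : ∞ ∈ E
  · obtain ⟨K, hK⟩ := exists_norm_le_mul_one_sub_sq_norm (hUB ∞ hinf) (hcoeff hinf)
    exact ⟨K, fun _ => by rwa [evalPt_mk_polePoly_infty hc hinf hP]⟩
  · exact ⟨0, fun h => absurd h hinf⟩

theorem gapDominated_mk_polePoly (hE : IsClosed E) (hc : ∀ k, c k ∉ E) (hmem : MemL c F)
    (hUB : UnitBdd E F) {P ξ w : ℂ[X]} (hP : P.natDegree ≤ n) (hPN : ξ * P = defect F * w)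
    (hξ : ∀ r : ℝ, (r : RLine) ∈ E → ξ.eval (r : ℂ) ≠ 0)
    (hw : ∞ ∈ E → (w * F.denom ^ 2).degree ≤ (ξ * polePoly c).degree)
    (hcoeff : ∞ ∈ E → ‖evalPt F ∞‖ = 1 → P.coeff n = 0) :
    GapDominated E F (RatFunc.mk P (polePoly c)) := by
  obtain ⟨K₁, hK₁⟩ := exists_bound_evalPt_coe hE hc hmem hUB hPN hξ hw
  obtain ⟨K₂, hK₂⟩ := exists_bound_evalPt_infty hc hUB hP hcoeff
  refine ⟨max K₁ K₂, fun x hx => ?_⟩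
  have hgap : 0 ≤ 1 - ‖evalPt F x‖ ^ 2 := by nlinarith [hUB x hx, norm_nonneg (evalPt F x)]
  cases x using OnePoint.rec with
  | infty => exact (hK₂ hx).trans (mul_le_mul_of_nonneg_right (le_max_right _ _) hgap)
  | coe r => exact (hK₁ r hx).trans (mul_le_mul_of_nonneg_right (le_max_left _ _) hgap)

end Domination

section Direction

variable {n : ℕ} {E : Set RLine} {c : Fin n → RLine} {F : RatFunc ℂ}

theorem natDegree_defect_lt_of_norm_evalPt_infty (hc : ∀ k, c k ∉ E) (hinf : ∞ ∈ E)
    (hmem : MemL c F) (h2D : 2 * max F.num.natDegree F.denom.natDegree ≤ n)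
    (hN : defect F ≠ 0) (h1 : ‖evalPt F ∞‖ = 1) : (defect F).natDegree < n := by
  obtain ⟨β, hβ, hF, hh⟩ := exists_eq_mk_polePoly hmem
  rw [hF, evalPt_mk_polePoly_infty hc hinf hh] at h1
  have hβ0 : β ≠ 0 := right_ne_zero_of_mul (hβ ▸ polePoly_ne_zero c)
  have hβmonic : β.Monic := by
    have := congrArg leadingCoeff hβ
    rwa [(polePoly_monic c).leadingCoeff, leadingCoeff_mul, F.monic_denom.leadingCoeff,
      one_mul, eq_comm] at this
  have hcoeff : (F.num * β).coeff n ≠ 0 := fun h0 => by simp [h0] at h1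
  have hdeg : (F.num * β).natDegree = n := hh.antisymm (le_natDegree_of_ne_zero hcoeff)
  have hnum : F.num ≠ 0 := left_ne_zero_of_mul fun h0 => hcoeff (by rw [h0, coeff_zero])
  have hqdeg := congrArg natDegree hβ
  rw [natDegree_polePoly hc hinf, natDegree_mul F.denom_ne_zero hβ0] at hqdeg
  rw [natDegree_mul hnum hβ0] at hdeg
  have hlc : ‖F.num.leadingCoeff‖ = 1 := by
    rwa [← hdeg, ← natDegree_mul hnum hβ0, coeff_natDegree, leadingCoeff_mul,
      hβmonic.leadingCoeff, mul_one] at h1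
  have := natDegree_defect_lt (by omega) hlc hN
  omega

theorem exists_gapDominated_eval_ne_zero (hE : IsClosed E) (hc : ∀ k, c k ∉ E) (hmem : MemL c F)
    (hUB : UnitBdd E F) (h2D : 2 * max F.num.natDegree F.denom.natDegree ≤ n)
    (hN : defect F ≠ 0) {r₀ : ℝ} (hr₀ : (r₀ : RLine) ∉ E) :
    ∃ P : ℂ[X], P.natDegree ≤ n ∧ P.eval (r₀ : ℂ) ≠ 0 ∧
      GapDominated E F (RatFunc.mk P (polePoly c)) := by
  set ξ := (X - C (r₀ : ℂ)) ^ (defect F).rootMultiplicity (r₀ : ℂ)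
  set P := defect F /ₘ ξ
  have hPN : ξ * P = defect F * 1 := by
    rw [mul_one]; exact pow_mul_divByMonic_rootMultiplicity_eq _ _
  have hdegPN : P.natDegree ≤ (defect F).natDegree :=
    natDegree_le_natDegree (degree_divByMonic_le _ _)
  have hdegP : P.natDegree ≤ n := hdegPN.trans (natDegree_defect_le.trans h2D)
  have hξ : ∀ r : ℝ, (r : RLine) ∈ E → ξ.eval (r : ℂ) ≠ 0 := by
    intro r hr
    simp only [ξ, eval_pow, eval_sub, eval_X, eval_C]
    refine pow_ne_zero _ (sub_ne_zero.2 fun h => hr₀ ?_)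
    rwa [← Complex.ofReal_inj.1 h]
  have hw (hinf : ∞ ∈ E) : (1 * F.denom ^ 2).degree ≤ (ξ * polePoly c).degree := by
    rw [one_mul, degree_mul, degree_eq_natDegree (polePoly_monic c).ne_zero,
      natDegree_polePoly hc hinf]
    have hq : (F.denom ^ 2).natDegree ≤ n := natDegree_pow_le.trans (le_trans (by omega) h2D)
    exact (degree_le_of_natDegree_le hq).trans
      (le_add_of_nonneg_left (zero_le_degree_iff.2 (pow_ne_zero _ (X_sub_C_ne_zero _))))
  have hcoeff (hinf : ∞ ∈ E) (h1 : ‖evalPt F ∞‖ = 1) : P.coeff n = 0 :=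
    coeff_eq_zero_of_natDegree_lt <|
      hdegPN.trans_lt (natDegree_defect_lt_of_norm_evalPt_infty hc hinf hmem h2D hN h1)
  exact ⟨P, hdegP, eval_divByMonic_pow_rootMultiplicity_ne_zero _ hN,
    gapDominated_mk_polePoly hE hc hmem hUB hdegP hPN hξ hw hcoeff⟩

theorem exists_gapDominated_coeff_ne_zero (hE : IsClosed E) (hc : ∀ k, c k ∉ E)
    (hmem : MemL c F) (hUB : UnitBdd E F) (h2D : 2 * max F.num.natDegree F.denom.natDegree ≤ n)
    (hN : defect F ≠ 0) (hinf : ∞ ∉ E) :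
    ∃ P : ℂ[X], P.natDegree ≤ n ∧ P.coeff n ≠ 0 ∧
      GapDominated E F (RatFunc.mk P (polePoly c)) := by
  have hdegN : (defect F).natDegree ≤ n := natDegree_defect_le.trans h2D
  set P := defect F * X ^ (n - (defect F).natDegree)
  have hdegP : P.natDegree = n := by
    rw [natDegree_mul hN (pow_ne_zero _ X_ne_zero), natDegree_X_pow]
    omega
  refine ⟨P, hdegP.le, ?_, gapDominated_mk_polePoly hE hc hmem hUB hdegP.le (one_mul P)
    (fun _ _ => by simp) (fun h => absurd h hinf) (fun h => absurd h hinf)⟩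
  rw [← hdegP, coeff_natDegree]
  exact leadingCoeff_ne_zero.2 (mul_ne_zero hN (pow_ne_zero _ X_ne_zero))

theorem exists_gapDominated_leadVal_ne_zero (hE : IsClosed E) (hc : ∀ k, c k ∉ E)
    (hmem : MemL c F) (hUB : UnitBdd E F) (h2D : 2 * max F.num.natDegree F.denom.natDegree ≤ n)
    (hN : defect F ≠ 0) {xs : RLine} (hxs : xs ∉ E) :
    ∃ G : RatFunc ℂ, MemL c G ∧ leadVal G xs (polesDiv c (embR xs)) ≠ 0 ∧ GapDominated E F G := by
  cases xs using OnePoint.rec with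
  | infty =>
    obtain ⟨P, hP, hcoeff, hdom⟩ := exists_gapDominated_coeff_ne_zero hE hc hmem hUB h2D hN hxs
    exact ⟨_, memL_mk hP, by rwa [leadVal_mk_polePoly_infty hP], hdom⟩
  | coe r₀ =>
    obtain ⟨P, hP, heval, hdom⟩ := exists_gapDominated_eval_ne_zero hE hc hmem hUB h2D hN hxs
    refine ⟨_, memL_mk hP, ?_, hdom⟩
    rw [leadVal_mk_polePoly_coe]
    exact div_ne_zero (mul_ne_zero (pow_ne_zero _ (by norm_num)) heval)
      (eval_divByMonic_pow_rootMultiplicity_ne_zero _ (polePoly_ne_zero c))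

end Direction

end RationalExtremal

open RationalExtremal in
theorem extremal_degree_lower_bound_general
    {n : ℕ} (E : Set RLine) (hEcl : IsClosed E)
    (c : Fin n → RLine) (hc : ∀ k, c k ∉ E)
    (xs : RLine) (hxs : xs ∉ E)
    (F : RatFunc ℂ) (hF : IsExtremal E c xs F) (hnc : ∀ a : ℂ, F ≠ RatFunc.C a) :
    (n + 2) / 2 ≤ max F.num.natDegree F.denom.natDegree := by
  by_contra! hlt
  obtain ⟨hmem, hUB, hmax⟩ := hF
  obtain ⟨G, hGmem, hlead, hdom⟩ :=
    exists_gapDominated_leadVal_ne_zero hEcl hc hmem hUB (by omega) (defect_ne_zero hnc) hxs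
  obtain ⟨t₀, ht₀, hsmall⟩ := hdom.exists_unitBdd_add_C_mul hc hmem hGmem hUB
  obtain ⟨σ, hσ, hpos⟩ := exists_norm_le_re_mul_pos hlead ht₀
  have := hmax _ (hmem.add_C_mul hGmem σ) (hsmall σ hσ)
  rw [leadVal_add_C_mul hmem hGmem, Complex.add_re] at this
  linarith

/-- If the extremal function is nonconstant, then its degree as a rational map
is at least `⌈(n+1)/2⌉`. -/
theorem extremal_degree_lower_bound
    {n : ℕ} (E : Set RLine) (hEcl : IsClosed E) (hEinf : E.Infinite)
    (c : Fin n → RLine) (hc : ∀ k, c k ∉ E)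
    (xs : RLine) (hxs : xs ∉ E)
    (F : RatFunc ℂ) (hF : IsExtremal E c xs F) (hnc : ∀ a : ℂ, F ≠ RatFunc.C a) :
    (n + 2) / 2 ≤ max F.num.natDegree F.denom.natDegree :=
  extremal_degree_lower_bound_general E hEcl c hc xs hxs F hF hnc
end
end

section
/- Normal-family convergence criterion: let (q_n) be a normal family of analytic functions on the unit disk 𝔻, and q_∞ analytic on 𝔻. Suppose there exist ζ₀ ∈ 𝔻 and a neighborhood V of ζ₀ such that |q_n(ζ)| → |q_∞(ζ)| for all ζ ∈ V, and q_n(ζ₀) > 0 for all n with q_∞(ζ₀) > 0. Then q_n → q_∞ uniformly on compact subsets of 𝔻. -/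
/-! Every subsequence of `q` has a further subsequence converging locally uniformly to some
analytic `g`, so it suffices to show `g = q_∞`. Passing to the limit, `|g| = |q_∞|` near `ζ₀` and
`g(ζ₀)` is a nonnegative real of the same modulus as `q_∞(ζ₀) > 0`, hence equal to it. Near `ζ₀`
the quotient `g / q_∞` is holomorphic of constant modulus one, so by the maximum modulus principle
it is constant, equal to its value `1` at `ζ₀`; the identity theorem propagates `g = q_∞` to the
whole disk. -/

open Filter Set Topology
open scoped ComplexOrder

theorem tendstoUniformlyOn_of_subseq_tendstoUniformlyOn {α β : Type*} [UniformSpace β]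
    {F : ℕ → α → β} {f : α → β} {s : Set α}
    (h : ∀ φ : ℕ → ℕ, StrictMono φ →
      ∃ ψ : ℕ → ℕ, TendstoUniformlyOn (fun n => F (φ (ψ n))) f atTop s) :
    TendstoUniformlyOn F f atTop s := by
  intro u hu
  by_contra hfreq
  obtain ⟨φ, hφ, hbad⟩ := extraction_of_frequently_atTop (not_eventually.mp hfreq)
  obtain ⟨ψ, hψ⟩ := h φ hφ
  obtain ⟨n, hn⟩ := (hψ u hu).exists
  exact hbad (ψ n) hn

theorem Complex.eq_of_nonneg_of_norm_eq {z w : ℂ} (hz : 0 ≤ z) (hw : 0 ≤ w) (h : ‖z‖ = ‖w‖) :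
    z = w :=
  Complex.ext (by rw [Complex.re_eq_norm.mpr hz, Complex.re_eq_norm.mpr hw, h])
    (by rw [← (Complex.nonneg_iff.mp hz).2, ← (Complex.nonneg_iff.mp hw).2])

theorem eqOn_of_eventually_norm_eq {U : Set ℂ} {z₀ : ℂ} {f g : ℂ → ℂ} (hU : IsOpen U)
    (hU' : IsPreconnected U) (hf : DifferentiableOn ℂ f U) (hg : DifferentiableOn ℂ g U)
    (hz₀ : z₀ ∈ U) (hf₀ : f z₀ ≠ 0) (hgf₀ : g z₀ = f z₀)
    (hnorm : ∀ᶠ z in 𝓝 z₀, ‖g z‖ = ‖f z‖) : EqOn g f U := by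
  have hfne : ∀ᶠ z in 𝓝 z₀, f z ≠ 0 :=
    (hf.continuousOn.continuousAt (hU.mem_nhds hz₀)).eventually_ne hf₀
  have hdiff : ∀ᶠ z in 𝓝 z₀, DifferentiableAt ℂ (fun z => g z / f z) z := by
    filter_upwards [hU.mem_nhds hz₀, hfne] with z hzU hfz
    exact (hg.differentiableAt (hU.mem_nhds hzU)).div (hf.differentiableAt (hU.mem_nhds hzU)) hfz
  have hunit : ∀ᶠ z in 𝓝 z₀, ‖g z / f z‖ = 1 := by
    filter_upwards [hnorm, hfne] with z hgf hfz
    rw [norm_div, hgf, div_self (norm_ne_zero_iff.mpr hfz)]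
  have hmax : IsLocalMax (norm ∘ fun z => g z / f z) z₀ := by
    filter_upwards [hunit] with z hz
    simp only [Function.comp_apply, hz, hunit.self_of_nhds, le_refl]
  have hloc : g =ᶠ[𝓝 z₀] f := by
    filter_upwards [Complex.eventually_eq_of_isLocalMax_norm hdiff hmax, hfne] with z hz hfz
    rwa [hgf₀, div_self hf₀, div_eq_one_iff_eq hfz] at hz
  exact (hg.analyticOnNhd hU).eqOn_of_preconnected_of_eventuallyEq (hf.analyticOnNhd hU) hU' hz₀
    hloc

theorem eqOn_of_tendsto_of_tendsto_norm {ι : Type*} {l : Filter ι} [l.NeBot] {Q : ι → ℂ → ℂ}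
    {U V : Set ℂ} {z₀ : ℂ} {f g : ℂ → ℂ} (hU : IsOpen U) (hU' : IsPreconnected U)
    (hf : DifferentiableOn ℂ f U) (hg : DifferentiableOn ℂ g U) (hz₀ : z₀ ∈ U) (hV : V ∈ 𝓝 z₀)
    (hQg : ∀ z ∈ V, Tendsto (fun n => Q n z) l (𝓝 (g z)))
    (hQf : ∀ z ∈ V, Tendsto (fun n => ‖Q n z‖) l (𝓝 ‖f z‖))
    (hQ₀ : ∀ᶠ n in l, 0 ≤ Q n z₀) (hf₀ : 0 < f z₀) : EqOn g f U := by
  have hnorm : ∀ z ∈ V, ‖g z‖ = ‖f z‖ := fun z hz =>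
    tendsto_nhds_unique (hQg z hz).norm (hQf z hz)
  have hg₀ : 0 ≤ g z₀ := ge_of_tendsto (hQg z₀ (mem_of_mem_nhds hV)) hQ₀
  exact eqOn_of_eventually_norm_eq hU hU' hf hg hz₀ hf₀.ne'
    (Complex.eq_of_nonneg_of_norm_eq hg₀ hf₀.le (hnorm z₀ (mem_of_mem_nhds hV)))
    (eventually_of_mem hV hnorm)

theorem normal_family_convergence_general
    (q : ℕ → ℂ → ℂ) (qinf : ℂ → ℂ)
    (hnormal : ∀ s : ℕ → ℕ, StrictMono s →
      ∃ (t : ℕ → ℕ) (g : ℂ → ℂ), StrictMono t ∧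
        DifferentiableOn ℂ g (Metric.ball (0 : ℂ) 1) ∧
        TendstoLocallyUniformlyOn (fun k => q (s (t k))) g Filter.atTop
          (Metric.ball (0 : ℂ) 1))
    (hqinf : DifferentiableOn ℂ qinf (Metric.ball (0 : ℂ) 1))
    (ζ₀ : ℂ) (hζ₀ : ζ₀ ∈ Metric.ball (0 : ℂ) 1)
    (V : Set ℂ) (hV : V ∈ nhds ζ₀) (hVsub : V ⊆ Metric.ball (0 : ℂ) 1)
    (habs : ∀ ζ ∈ V, Filter.Tendsto (fun n => ‖q n ζ‖) Filter.atTop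
      (nhds ‖qinf ζ‖))
    (hpos : ∀ n, 0 < (q n ζ₀).re ∧ (q n ζ₀).im = 0)
    (hposinf : 0 < (qinf ζ₀).re ∧ (qinf ζ₀).im = 0) :
    TendstoLocallyUniformlyOn q qinf Filter.atTop (Metric.ball (0 : ℂ) 1) := by
  have hball : IsOpen (Metric.ball (0 : ℂ) 1) := Metric.isOpen_ball
  rw [tendstoLocallyUniformlyOn_iff_forall_isCompact hball]
  intro K hKball hK
  refine tendstoUniformlyOn_of_subseq_tendstoUniformlyOn fun s hs => ?_
  obtain ⟨t, g, ht, hg, hconv⟩ := hnormal s hs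
  have hst : Tendsto (fun k => s (t k)) atTop atTop := (hs.comp ht).tendsto_atTop
  have hgq : EqOn g qinf (Metric.ball 0 1) :=
    eqOn_of_tendsto_of_tendsto_norm hball (convex_ball 0 1).isPreconnected hqinf hg hζ₀ hV
      (fun ζ hζ => hconv.tendsto_at (hVsub hζ)) (fun ζ hζ => (habs ζ hζ).comp hst)
      (Eventually.of_forall fun k => (Complex.pos_iff.mpr ⟨(hpos _).1, (hpos _).2.symm⟩).le)
      (Complex.pos_iff.mpr ⟨hposinf.1, hposinf.2.symm⟩)
  exact ⟨t, ((tendstoLocallyUniformlyOn_iff_forall_isCompact hball).mp hconv K hKball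
    hK).congr_right (hgq.mono hKball)⟩

/-- Normal-family convergence criterion: if `(q_n)` is a normal family of analytic
functions on the unit disk, `q_∞` is analytic, `|q_n| → |q_∞|` pointwise on a
neighborhood of some `ζ₀`, and `q_n(ζ₀) > 0`, `q_∞(ζ₀) > 0`, then `q_n → q_∞`
uniformly on compact subsets of the disk. -/
theorem normal_family_convergence
    (q : ℕ → ℂ → ℂ) (qinf : ℂ → ℂ)
    (hq : ∀ n, DifferentiableOn ℂ (q n) (Metric.ball (0 : ℂ) 1))
    (hnormal : ∀ s : ℕ → ℕ, StrictMono s →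
      ∃ (t : ℕ → ℕ) (g : ℂ → ℂ), StrictMono t ∧
        DifferentiableOn ℂ g (Metric.ball (0 : ℂ) 1) ∧
        TendstoLocallyUniformlyOn (fun k => q (s (t k))) g Filter.atTop
          (Metric.ball (0 : ℂ) 1))
    (hqinf : DifferentiableOn ℂ qinf (Metric.ball (0 : ℂ) 1))
    (ζ₀ : ℂ) (hζ₀ : ζ₀ ∈ Metric.ball (0 : ℂ) 1)
    (V : Set ℂ) (hV : V ∈ nhds ζ₀) (hVsub : V ⊆ Metric.ball (0 : ℂ) 1)
    (habs : ∀ ζ ∈ V, Filter.Tendsto (fun n => ‖q n ζ‖) Filter.atTop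
      (nhds ‖qinf ζ‖))
    (hpos : ∀ n, 0 < (q n ζ₀).re ∧ (q n ζ₀).im = 0)
    (hposinf : 0 < (qinf ζ₀).re ∧ (qinf ζ₀).im = 0) :
    TendstoLocallyUniformlyOn q qinf Filter.atTop (Metric.ball (0 : ℂ) 1) :=
  normal_family_convergence_general q qinf hnormal hqinf ζ₀ hζ₀ V hV hVsub habs hpos hposinf
end
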